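/- arXiv:2402.15625 — 2 statements merged into one kernel-verified Lean document; each statement's English description precedes it below -/
import Mathlib

section
/- Let d be a positive integer and let f : ℝ^d → ℝ^d be a map such that each coordinate of the output depends only on strictly earlier coordinates of the input: for all x, y ∈ ℝ^d and all indices i, if x_j = y_j for every j < i then (f(x))_i = (f(y))_i. Then the map x ↦ x − f(x) is a bijection from ℝ^d to ℝ^d. -/
/-- If each coordinate of `f : ℝ^d → ℝ^d` depends only on strictly earlier
coordinates of the input (the acyclic / topologically ordered case), then
`x ↦ x − f(x)` is a bijection of `ℝ^d`. -/
theorem id_sub_triangular_bijective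
    (d : ℕ) (hd : 0 < d)
    (f : (Fin d → ℝ) → (Fin d → ℝ))
    (hf : ∀ x y : Fin d → ℝ, ∀ i : Fin d,
      (∀ j : Fin d, j < i → x j = y j) → f x i = f y i) :
    Function.Bijective (fun x : Fin d → ℝ => x - f x) := by
  constructor
  · intro x x' h
    simp only at h
    have key2 : ∀ n : ℕ, ∀ i : Fin d, i.val < n → x i = x' i := by
      intro n
      induction n with
      | zero => intro i hi; omega
      | succ n ih =>
        intro i hi
        have hfi : f x i = f x' i := by
          apply hf
          intro j hj
          have hj' : (j : ℕ) < (i : ℕ) := hj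
          exact ih j (by omega)
        have hh := congrFun h i
        simp only [Pi.sub_apply] at hh
        linarith
    funext i
    exact key2 d i i.isLt
  · intro y
    set T : (Fin d → ℝ) → (Fin d → ℝ) := fun x => y + f x with hT
    have key : ∀ n : ℕ, ∀ i : Fin d, i.val < n →
        T^[n+1] 0 i = T^[n] 0 i := by
      intro n
      induction n with
      | zero => intro i hi; omega
      | succ n ih =>
        intro i hi
        have h1 : T^[n+1+1] 0 = T (T^[n+1] 0) := Function.iterate_succ_apply' T (n+1) 0
        have h2 : T^[n+1] 0 = T (T^[n] 0) := Function.iterate_succ_apply' T n 0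
        have lhs : T^[n+1+1] 0 i = y i + f (T^[n+1] 0) i := by
          rw [Function.iterate_succ_apply' T (n+1) 0]; rfl
        have rhs : T^[n+1] 0 i = y i + f (T^[n] 0) i := by
          rw [Function.iterate_succ_apply' T n 0]; rfl
        rw [lhs, rhs]
        congr 1
        apply hf
        intro j hj
        have hj' : (j : ℕ) < (i : ℕ) := hj
        exact ih j (by omega)
    refine ⟨T^[d] 0, ?_⟩
    have hfix : T (T^[d] 0) = T^[d] 0 := by
      funext i
      have hk := key d i i.isLt
      rw [← Function.iterate_succ_apply' T d 0]
      exact hk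
    have hc := congrFun hfix
    funext i
    have h := hc i
    simp only [hT, Pi.add_apply] at h
    simp only [Pi.sub_apply]
    linarith
end

section
/- Let (Ω, P) be a probability space, let N : Ω → ℕ be a measurable random variable such that P(N ≥ k) > 0 for every k ≥ 1, and let (a_k)_{k≥1} be a real sequence with ∑_{k≥1} |a_k|/P(N ≥ k) < ∞. Then the random variable ω ↦ ∑_{k=1}^{N(ω)} a_k / P(N ≥ k) is integrable and its expectation equals ∑_{k=1}^∞ a_k. -/
/-!
Write the estimator as the series `∑ₖ 1{N ≥ k} · aₖ / P(N ≥ k)`. Each term has expectation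
exactly `aₖ` and `L¹`-norm `|aₖ|`, so the norms are summable and expectation and summation may be
interchanged. Integrability is cruder: every truncation is bounded by `∑ₖ |aₖ| / P(N ≥ k)`.
-/

open MeasureTheory Finset

section Reweighting

variable {Ω : Type*} [MeasurableSpace Ω] {μ : Measure Ω} {s : Set Ω}

lemma integral_indicator_div_measureReal (hs : MeasurableSet s) (hμs : μ.real s ≠ 0) (c : ℝ) :
    ∫ ω, s.indicator (fun _ => c / μ.real s) ω ∂μ = c := by
  rw [integral_indicator_const _ hs, smul_eq_mul, mul_div_cancel₀ _ hμs]

lemma integral_norm_indicator_div_measureReal (hs : MeasurableSet s) (hμs : μ.real s ≠ 0)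
    (c : ℝ) : ∫ ω, ‖s.indicator (fun _ => c / μ.real s) ω‖ ∂μ = |c| := by
  have hpos : 0 < μ.real s := measureReal_nonneg.lt_of_ne' hμs
  simp_rw [norm_indicator_eq_indicator_norm, Real.norm_eq_abs, abs_div, abs_of_pos hpos]
  exact integral_indicator_div_measureReal hs hμs |c|

/- A set of infinite measure has real measure `0`, so `hμs` also rules out `μ s = ∞`. -/
lemma integrable_indicator_div_measureReal (hs : MeasurableSet s) (hμs : μ.real s ≠ 0)
    (c : ℝ) : Integrable (s.indicator fun _ => c / μ.real s) μ :=
  (integrableOn_const (fun h => hμs (by simp [measureReal_def, h]))).integrable_indicator hs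

theorem integral_tsum_indicator_div_measureReal {s : ℕ → Set Ω} (hs : ∀ k, MeasurableSet (s k))
    (hμs : ∀ k, μ.real (s k) ≠ 0) {a : ℕ → ℝ} (ha : Summable fun k => |a k|) :
    ∫ ω, ∑' k, (s k).indicator (fun _ => a k / μ.real (s k)) ω ∂μ = ∑' k, a k := by
  rw [← integral_tsum_of_summable_integral_norm
    (fun k => integrable_indicator_div_measureReal (hs k) (hμs k) (a k))]
  · simp_rw [integral_indicator_div_measureReal (hs _) (hμs _)]
  · simpa only [integral_norm_indicator_div_measureReal (hs _) (hμs _)] using ha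

end Reweighting

section RandomTruncation

variable {Ω : Type*}

lemma sum_Icc_one_eq_sum_range {M : Type*} [AddCommMonoid M] (b : ℕ → M) (n : ℕ) :
    ∑ k ∈ Icc 1 n, b k = ∑ k ∈ range n, b (k + 1) := by
  rw [range_eq_Ico, sum_Ico_add', ← Ico_add_one_right_eq_Icc, zero_add]

lemma sum_Icc_one_eq_tsum_indicator {M : Type*} [AddCommMonoid M] [TopologicalSpace M]
    (N : Ω → ℕ) (b : ℕ → M) (ω : Ω) :
    ∑ k ∈ Icc 1 (N ω), b k = ∑' k, {ω | k + 1 ≤ N ω}.indicator (fun _ => b (k + 1)) ω := by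
  rw [sum_Icc_one_eq_sum_range, tsum_eq_sum (s := range (N ω)) fun k hk =>
    Set.indicator_of_notMem (s := {ω | k + 1 ≤ N ω}) (mt mem_range.2 hk) _]
  exact sum_congr rfl fun k hk =>
    (Set.indicator_of_mem (s := {ω | k + 1 ≤ N ω}) (mem_range.1 hk) (fun _ => b (k + 1))).symm

variable [MeasurableSpace Ω] {μ : Measure Ω} [IsFiniteMeasure μ]

lemma integrable_sum_Icc_one {E : Type*} [NormedAddCommGroup E] {N : Ω → ℕ} (hN : Measurable N)
    {b : ℕ → E} (hb : Summable fun k => ‖b (k + 1)‖) :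
    Integrable (fun ω => ∑ k ∈ Icc 1 (N ω), b k) μ := by
  have hmeas : StronglyMeasurable fun ω => ∑ k ∈ Icc 1 (N ω), b k :=
    (StronglyMeasurable.of_discrete (f := fun n => ∑ k ∈ Icc 1 n, b k)).comp_measurable hN
  refine .of_bound hmeas.aestronglyMeasurable (∑' k, ‖b (k + 1)‖) (.of_forall fun ω => ?_)
  calc ‖∑ k ∈ Icc 1 (N ω), b k‖
      ≤ ∑ k ∈ Icc 1 (N ω), ‖b k‖ := norm_sum_le _ _
    _ = ∑ k ∈ range (N ω), ‖b (k + 1)‖ := sum_Icc_one_eq_sum_range (‖b ·‖) (N ω)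
    _ ≤ ∑' k, ‖b (k + 1)‖ := hb.sum_le_tsum _ fun k _ => norm_nonneg _

end RandomTruncation

/-- Russian-roulette estimator: truncating a series at a random cutoff `N`
and reweighting the `k`-th term by `1 / P(N ≥ k)` gives an integrable random
variable whose expectation is the full sum `∑_{k ≥ 1} a_k`. -/
theorem russian_roulette_unbiased
    {Ω : Type*} [MeasurableSpace Ω] (P : Measure Ω) [IsProbabilityMeasure P]
    (N : Ω → ℕ) (hN : Measurable N)
    (hpos : ∀ k : ℕ, 1 ≤ k → 0 < (P {ω | k ≤ N ω}).toReal)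
    (a : ℕ → ℝ)
    (hsum : Summable fun k : ℕ => |a (k + 1)| / (P {ω | k + 1 ≤ N ω}).toReal) :
    Integrable
      (fun ω => ∑ k ∈ Finset.Icc 1 (N ω), a k / (P {ω' | k ≤ N ω'}).toReal) P ∧
    ∫ ω, (∑ k ∈ Finset.Icc 1 (N ω), a k / (P {ω' | k ≤ N ω'}).toReal) ∂P =
      ∑' k : ℕ, a (k + 1) := by
  have hp k : 0 < (P {ω | k + 1 ≤ N ω}).toReal := hpos (k + 1) le_add_self
  have ha : Summable fun k => |a (k + 1)| :=
    hsum.of_nonneg_of_le (fun _ => abs_nonneg _) fun k =>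
      le_div_self (abs_nonneg _) (hp k) measureReal_le_one
  refine ⟨integrable_sum_Icc_one hN ?_, ?_⟩
  · simpa only [Real.norm_eq_abs, abs_div, abs_of_pos (hp _)] using hsum
  · simp_rw [sum_Icc_one_eq_tsum_indicator N]
    exact integral_tsum_indicator_div_measureReal (fun _ => hN measurableSet_Ici)
      (fun k => (hp k).ne') ha
end
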